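/- arXiv:1803.09345 — 6 statements merged into one kernel-verified Lean document; each statement's English description precedes it below -/
import Mathlib

section
/- Let 0 < g₀ ≤ g₁ ≤ 2g₀, a ∈ [g₀, g₁], 0 < s < 1, and let φ : (0,a) → ℝ be measurable. Then ∫_a^{g₁} ∫₀^{a} |φ(2a − y₁) − φ(y₂)|² / |y₁ − y₂|^{1+2s} dy₂ dy₁ ≤ 3^{1+2s} ∫₀^{a} ∫₀^{a} |φ(z₁) − φ(y₂)|² / |z₁ − y₂|^{1+2s} dy₂ dz₁. (The key pointwise fact is that for y₁ ∈ (a, g₁) and y₂ ∈ (0, a), setting z₁ = 2a − y₁ ∈ (0,a), one has |z₁ − y₂| ≤ 3|y₁ − y₂|.) -/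
open MeasureTheory Set

/-!
Reflecting `y₁ ∈ (a, g₁)` to `z₁ = 2a - y₁` does not increase its distance to any `y₂ < a`,
so the kernel `|y₁ - y₂|^{-(1+2s)}` is dominated by `|z₁ - y₂|^{-(1+2s)}`; the reflection is
measure preserving and maps `(a, g₁)` into `(0, a)` because `g₁ ≤ 2g₀ ≤ 2a`.
-/

lemma abs_two_mul_sub_sub_le_abs_sub {a y₁ y₂ : ℝ} (hy₁ : a ≤ y₁) (hy₂ : y₂ ≤ a) :
    |(2 * a - y₁) - y₂| ≤ |y₁ - y₂| := by
  rw [abs_of_nonneg (by linarith : 0 ≤ y₁ - y₂), abs_le]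
  constructor <;> linarith

lemma sq_sub_div_abs_sub_rpow_le_of_abs_sub_le (φ : ℝ → ℝ) {x y z p : ℝ} (hp : 0 ≤ p)
    (h : |x - y| ≤ |z - y|) :
    (φ x - φ y) ^ 2 / |z - y| ^ p ≤ (φ x - φ y) ^ 2 / |x - y| ^ p := by
  rcases eq_or_ne x y with rfl | hxy
  · simp
  have hxy' : 0 < |x - y| := abs_pos.mpr (sub_ne_zero.mpr hxy)
  exact div_le_div_of_nonneg_left (sq_nonneg _) (Real.rpow_pos_of_pos hxy' p)
    (Real.rpow_le_rpow hxy'.le h hp)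

lemma setLIntegral_Ioo_comp_const_sub (f : ℝ → ENNReal) (c a b : ℝ) :
    ∫⁻ x in Ioo a b, f (c - x) = ∫⁻ x in Ioo (c - b) (c - a), f x := by
  have hpre : Ioo a b = (c - ·) ⁻¹' Ioo (c - b) (c - a) := by simp
  rw [hpre]
  exact (Measure.measurePreserving_sub_left volume c).setLIntegral_comp_preimage_emb
    (MeasurableEquiv.subLeft c).measurableEmbedding f _

lemma lintegral_reflect_gagliardo_le (φ : ℝ → ℝ) {a b c p : ℝ} (hp : 0 ≤ p) :
    ∫⁻ y₁ in Ioo a b, ∫⁻ y₂ in Ioo c a,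
        ENNReal.ofReal ((φ (2 * a - y₁) - φ y₂) ^ 2 / |y₁ - y₂| ^ p)
      ≤ ∫⁻ z₁ in Ioo (2 * a - b) a, ∫⁻ y₂ in Ioo c a,
        ENNReal.ofReal ((φ z₁ - φ y₂) ^ 2 / |z₁ - y₂| ^ p) := by
  calc _ ≤ ∫⁻ y₁ in Ioo a b, ∫⁻ y₂ in Ioo c a,
          ENNReal.ofReal ((φ (2 * a - y₁) - φ y₂) ^ 2 / |(2 * a - y₁) - y₂| ^ p) := by
        refine setLIntegral_mono' measurableSet_Ioo fun y₁ hy₁ ↦ ?_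
        refine setLIntegral_mono' measurableSet_Ioo fun y₂ hy₂ ↦ ?_
        exact ENNReal.ofReal_le_ofReal <| sq_sub_div_abs_sub_rpow_le_of_abs_sub_le φ hp <|
          abs_two_mul_sub_sub_le_abs_sub hy₁.1.le hy₂.2.le
    _ = _ := by
        rw [setLIntegral_Ioo_comp_const_sub (fun z₁ ↦ ∫⁻ y₂ in Ioo c a,
          ENNReal.ofReal ((φ z₁ - φ y₂) ^ 2 / |z₁ - y₂| ^ p)), show 2 * a - a = a by ring]

theorem reflection_gagliardo_B_general (g₀ g₁ a s : ℝ)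
    (hg₁ : g₁ ≤ 2 * g₀) (ha : a ∈ Icc g₀ g₁) (hs : s ∈ Ioo (0 : ℝ) 1)
    (φ : ℝ → ℝ) :
    (∀ y₁ ∈ Ioo a g₁, ∀ y₂ ∈ Ioo (0 : ℝ) a,
        2 * a - y₁ ∈ Ioo (0 : ℝ) a ∧ |(2 * a - y₁) - y₂| ≤ 3 * |y₁ - y₂|) ∧
    ∫⁻ y₁ in Ioo a g₁, ∫⁻ y₂ in Ioo (0 : ℝ) a,
        ENNReal.ofReal ((φ (2 * a - y₁) - φ y₂) ^ 2 / |y₁ - y₂| ^ (1 + 2 * s))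
      ≤ ENNReal.ofReal (3 ^ (1 + 2 * s)) *
        ∫⁻ z₁ in Ioo (0 : ℝ) a, ∫⁻ y₂ in Ioo (0 : ℝ) a,
          ENNReal.ofReal ((φ z₁ - φ y₂) ^ 2 / |z₁ - y₂| ^ (1 + 2 * s)) := by
  have hp : 0 ≤ 1 + 2 * s := by linarith [hs.1]
  have hreflect : 0 ≤ 2 * a - g₁ := by linarith [ha.1]
  refine ⟨fun y₁ hy₁ y₂ hy₂ ↦ ⟨⟨by linarith [hy₁.2], by linarith [hy₁.1]⟩, ?_⟩, ?_⟩
  · exact (abs_two_mul_sub_sub_le_abs_sub hy₁.1.le hy₂.2.le).trans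
      (le_mul_of_one_le_left (abs_nonneg _) (by norm_num))
  calc _ ≤ ∫⁻ z₁ in Ioo (2 * a - g₁) a, ∫⁻ y₂ in Ioo (0 : ℝ) a,
          ENNReal.ofReal ((φ z₁ - φ y₂) ^ 2 / |z₁ - y₂| ^ (1 + 2 * s)) :=
        lintegral_reflect_gagliardo_le φ hp
    _ ≤ ∫⁻ z₁ in Ioo (0 : ℝ) a, ∫⁻ y₂ in Ioo (0 : ℝ) a,
          ENNReal.ofReal ((φ z₁ - φ y₂) ^ 2 / |z₁ - y₂| ^ (1 + 2 * s)) :=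
        lintegral_mono_set (Ioo_subset_Ioo_left hreflect)
    _ ≤ _ := le_mul_of_one_le_left bot_le
        (ENNReal.one_le_ofReal.mpr (Real.one_le_rpow (by norm_num) hp))

/-- Let `0 < g₀ ≤ g₁ ≤ 2g₀`, `a ∈ [g₀, g₁]`, `0 < s < 1` and `φ` measurable
on `(0,a)`. Then the mixed Gagliardo double integral of the reflected function over
`(a,g₁) × (0,a)` is bounded by `3^{1+2s}` times the Gagliardo seminorm (squared) of `φ`
over `(0,a)²`; the key pointwise fact is that `|2a - y₁ - y₂| ≤ 3 |y₁ - y₂|` there. -/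
theorem reflection_gagliardo_B (g₀ g₁ a s : ℝ) (hg₀ : 0 < g₀) (hg₀₁ : g₀ ≤ g₁)
    (hg₁ : g₁ ≤ 2 * g₀) (ha : a ∈ Icc g₀ g₁) (hs : s ∈ Ioo (0 : ℝ) 1)
    (φ : ℝ → ℝ) (hφ : Measurable φ) :
    (∀ y₁ ∈ Ioo a g₁, ∀ y₂ ∈ Ioo (0 : ℝ) a,
        2 * a - y₁ ∈ Ioo (0 : ℝ) a ∧ |(2 * a - y₁) - y₂| ≤ 3 * |y₁ - y₂|) ∧
    ∫⁻ y₁ in Ioo a g₁, ∫⁻ y₂ in Ioo (0 : ℝ) a,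
        ENNReal.ofReal ((φ (2 * a - y₁) - φ y₂) ^ 2 / |y₁ - y₂| ^ (1 + 2 * s))
      ≤ ENNReal.ofReal (3 ^ (1 + 2 * s)) *
        ∫⁻ z₁ in Ioo (0 : ℝ) a, ∫⁻ y₂ in Ioo (0 : ℝ) a,
          ENNReal.ofReal ((φ z₁ - φ y₂) ^ 2 / |z₁ - y₂| ^ (1 + 2 * s)) :=
  reflection_gagliardo_B_general g₀ g₁ a s hg₁ ha hs φ
end

section
/- Let 0 < g₀ ≤ g₁ ≤ 2g₀ and 0 < s < 1. There exists a constant C > 0, depending only on s (in particular independent of a), such that for every a ∈ [g₀, g₁] and every measurable φ : (0,a) → ℝ with ‖φ‖²_{H^s(0,a)} := ∫₀^a |φ|² + [φ]²_{s,(0,a)} < ∞, the reflection extension Pφ to (0,g₁) satisfies ∫₀^{g₁} |Pφ|² + [Pφ]²_{s,(0,g₁)} ≤ C ( ∫₀^{a} |φ|² + [φ]²_{s,(0,a)} ). -/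
/-!
Write `Pφ = φ ∘ ρ` with the folding map `ρ y = a - |a - y|`, which is `1`-Lipschitz and maps
`(0, g₁)` into `(0, a]`, hitting each point at most twice because `g₁ ≤ 2a`. Since the kernel
`|x - y|^{-(1+2s)}` decreases in `|x - y|`, the integrand of `[Pφ]²` at `(x, y)` is at most the
integrand of `[φ]²` at `(ρ x, ρ y)`, and integrating against the pushforward of Lebesgue measure
under `ρ`, which is at most twice Lebesgue measure on `(0, a)`, gives the bound with `C = 4`.
-/

open MeasureTheory Set

lemma setLIntegral_comp_const_sub_Ico (F : ℝ → ENNReal) (c a b : ℝ) :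
    ∫⁻ y in Ico a b, F (c - y) = ∫⁻ z in Ioc (c - b) (c - a), F z := by
  have h := (Measure.measurePreserving_sub_left volume c).setLIntegral_comp_preimage_emb
    (Homeomorph.subLeft c).measurableEmbedding F (Ioc (c - b) (c - a))
  rwa [preimage_const_sub_Ioc, sub_sub_cancel, sub_sub_cancel] at h

lemma lintegral_comp_fold_le (F : ℝ → ENNReal) {c a b : ℝ} (hb : b ≤ 2 * a - c) :
    ∫⁻ y in Ioo c b, F (a - |a - y|) ≤ 2 * ∫⁻ z in Ioo c a, F z := by
  have hleft : ∫⁻ y in Ioo c a, F (a - |a - y|) = ∫⁻ z in Ioo c a, F z :=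
    setLIntegral_congr_fun measurableSet_Ioo fun y hy => by
      rw [abs_of_pos (sub_pos.2 hy.2), sub_sub_cancel]
  have hright : ∫⁻ y in Ico a b, F (a - |a - y|) ≤ ∫⁻ z in Ioo c a, F z :=
    calc ∫⁻ y in Ico a b, F (a - |a - y|)
        = ∫⁻ y in Ico a b, F (2 * a - y) :=
          setLIntegral_congr_fun measurableSet_Ico fun y hy => by
            rw [abs_of_nonpos (sub_nonpos.2 hy.1)]; ring_nf
      _ = ∫⁻ z in Ioc (2 * a - b) (2 * a - a), F z := setLIntegral_comp_const_sub_Ico F _ _ _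
      _ ≤ ∫⁻ z in Ioc c a, F z := lintegral_mono_set (Ioc_subset_Ioc (by linarith) (by linarith))
      _ = ∫⁻ z in Ioo c a, F z := (setLIntegral_congr Ioo_ae_eq_Ioc).symm
  calc ∫⁻ y in Ioo c b, F (a - |a - y|)
      ≤ ∫⁻ y in Ioo c a ∪ Ico a b, F (a - |a - y|) :=
        lintegral_mono_set fun y hy => (lt_or_ge y a).imp (fun h => ⟨hy.1, h⟩) (fun h => ⟨h, hy.2⟩)
    _ ≤ (∫⁻ y in Ioo c a, F (a - |a - y|)) + ∫⁻ y in Ico a b, F (a - |a - y|) :=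
        lintegral_union_le _ _ _
    _ ≤ 2 * ∫⁻ z in Ioo c a, F z := by rw [hleft, two_mul]; gcongr

lemma lintegral_lintegral_comp_fold_le (k : ℝ → ℝ → ENNReal) {c a b : ℝ} (hb : b ≤ 2 * a - c) :
    ∫⁻ x in Ioo c b, ∫⁻ y in Ioo c b, k (a - |a - x|) (a - |a - y|) ≤
      4 * ∫⁻ x in Ioo c a, ∫⁻ y in Ioo c a, k x y :=
  calc ∫⁻ x in Ioo c b, ∫⁻ y in Ioo c b, k (a - |a - x|) (a - |a - y|)
      ≤ ∫⁻ x in Ioo c b, 2 * ∫⁻ y in Ioo c a, k (a - |a - x|) y :=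
        lintegral_mono fun x => lintegral_comp_fold_le _ hb
    _ ≤ 2 * ∫⁻ x in Ioo c a, 2 * ∫⁻ y in Ioo c a, k x y :=
        lintegral_comp_fold_le (fun x => 2 * ∫⁻ y in Ioo c a, k x y) hb
    _ = 4 * ∫⁻ x in Ioo c a, ∫⁻ y in Ioo c a, k x y := by
        rw [lintegral_const_mul' 2 _ ENNReal.ofNat_ne_top, ← mul_assoc]; norm_num

lemma abs_fold_sub_fold_le (a x y : ℝ) : |(a - |a - x|) - (a - |a - y|)| ≤ |x - y| := by
  simpa [abs_sub_comm] using abs_abs_sub_abs_le_abs_sub (a - y) (a - x)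

lemma reflect_eq_comp_fold (φ : ℝ → ℝ) (a y : ℝ) :
    (if y < a then φ y else φ (2 * a - y)) = φ (a - |a - y|) := by
  split_ifs with h
  · rw [abs_of_pos (sub_pos.2 h), sub_sub_cancel]
  · rw [abs_of_nonpos (sub_nonpos.2 (not_lt.1 h))]; ring_nf

lemma ofReal_sq_sub_div_rpow_le_of_abs_le {p : ℝ} (hp : 0 ≤ p) (φ : ℝ → ℝ) {x y u v : ℝ}
    (h : |u - v| ≤ |x - y|) :
    ENNReal.ofReal ((φ u - φ v) ^ 2 / |x - y| ^ p) ≤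
      ENNReal.ofReal ((φ u - φ v) ^ 2 / |u - v| ^ p) := by
  rcases eq_or_ne u v with rfl | huv
  · simp
  · have hpos : 0 < |u - v| := abs_pos.2 (sub_ne_zero.2 huv)
    gcongr

/-- For `0 < s < 1` there is a constant `C > 0` depending only on `s`
(in particular independent of `g₀, g₁` and `a`) such that whenever `0 < g₀ ≤ g₁ ≤ 2g₀`,
`a ∈ [g₀, g₁]` and `φ : (0,a) → ℝ` is measurable with finite `H^s(0,a)` norm
(`∫₀^a |φ|² + [φ]²_{s,(0,a)} < ∞`), the reflection extension
`Pφ(y) = φ y` for `y < a`, `Pφ(y) = φ (2a - y)` for `y ≥ a`, satisfies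
`∫₀^{g₁} |Pφ|² + [Pφ]²_{s,(0,g₁)} ≤ C (∫₀^a |φ|² + [φ]²_{s,(0,a)})`. -/
theorem reflection_extension_Hs_bound (s : ℝ) (hs : s ∈ Ioo (0 : ℝ) 1) :
    ∃ C : ℝ, 0 < C ∧
      ∀ g₀ g₁ a : ℝ, 0 < g₀ → g₀ ≤ g₁ → g₁ ≤ 2 * g₀ → a ∈ Icc g₀ g₁ →
      ∀ φ : ℝ → ℝ, Measurable φ →
      (∫⁻ y in Ioo (0 : ℝ) a, ENNReal.ofReal ((φ y) ^ 2)) +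
        (∫⁻ x in Ioo (0 : ℝ) a, ∫⁻ y in Ioo (0 : ℝ) a,
          ENNReal.ofReal ((φ x - φ y) ^ 2 / |x - y| ^ (1 + 2 * s))) < ⊤ →
      (∫⁻ y in Ioo (0 : ℝ) g₁,
          ENNReal.ofReal ((if y < a then φ y else φ (2 * a - y)) ^ 2)) +
        (∫⁻ x in Ioo (0 : ℝ) g₁, ∫⁻ y in Ioo (0 : ℝ) g₁,
          ENNReal.ofReal (((if x < a then φ x else φ (2 * a - x)) -
            (if y < a then φ y else φ (2 * a - y))) ^ 2 / |x - y| ^ (1 + 2 * s)))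
      ≤ ENNReal.ofReal C *
        ((∫⁻ y in Ioo (0 : ℝ) a, ENNReal.ofReal ((φ y) ^ 2)) +
          (∫⁻ x in Ioo (0 : ℝ) a, ∫⁻ y in Ioo (0 : ℝ) a,
            ENNReal.ofReal ((φ x - φ y) ^ 2 / |x - y| ^ (1 + 2 * s)))) := by
  refine ⟨4, by norm_num, fun g₀ g₁ a _ _ hg₁ ha φ _ _ => ?_⟩
  have hfold : g₁ ≤ 2 * a - 0 := by linarith [ha.1]
  have hp : 0 ≤ 1 + 2 * s := by linarith [hs.1]
  simp only [reflect_eq_comp_fold]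
  have hL := lintegral_comp_fold_le (fun z => ENNReal.ofReal (φ z ^ 2)) hfold
  have hS := lintegral_lintegral_comp_fold_le
    (fun u v => ENNReal.ofReal ((φ u - φ v) ^ 2 / |u - v| ^ (1 + 2 * s))) hfold
  calc _ ≤ 2 * (∫⁻ y in Ioo 0 a, ENNReal.ofReal (φ y ^ 2)) +
        4 * ∫⁻ x in Ioo 0 a, ∫⁻ y in Ioo 0 a,
          ENNReal.ofReal ((φ x - φ y) ^ 2 / |x - y| ^ (1 + 2 * s)) := by
        refine add_le_add hL (le_trans ?_ hS)
        exact lintegral_mono fun x => lintegral_mono fun y =>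
          ofReal_sq_sub_div_rpow_le_of_abs_le hp φ (abs_fold_sub_fold_le a x y)
    _ ≤ ENNReal.ofReal 4 * _ := by
        rw [ENNReal.ofReal_ofNat, mul_add]
        gcongr
        norm_num
end

section
/- Let a > 0, 0 < b ≤ a, and let φ₀ ∈ L²(0,a). Define iteratively, for n ≥ 1, functions φₙ on (−nb, a) by φₙ(y) = φₙ₋₁(y) for −(n−1)b < y < a and φₙ(y) = φₙ₋₁(−y − 2(n−1)b) for −nb < y ≤ −(n−1)b. Then each φₙ is well defined (the reflected argument −y − 2(n−1)b lies in the domain of φₙ₋₁) and ∫_{−nb}^{a} |φₙ(y)|² dy ≤ (n+1) ∫₀^{a} |φ₀(y)|² dy. -/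
open MeasureTheory Set
open scoped ENNReal

/-! Reflection `y ↦ -2nb - y` about `-nb` is measure preserving and carries the strip
`(-(n+1)b, -nb)` added at step `n + 1` onto the strip `(-nb, -(n-1)b)` added at step `n`. Hence
every new strip carries the same energy as `φ₀` on `(0, b) ⊆ (0, a)`, and each reflection step
raises the energy on `(-nb, a)` by at most `∫₀^a |φ₀|²`. -/

theorem lintegral_Ioo_comp_const_sub (c l u : ℝ) (g : ℝ → ℝ≥0∞) :
    ∫⁻ y in Ioo l u, g (c - y) = ∫⁻ y in Ioo (c - u) (c - l), g y := by
  have := (Measure.measurePreserving_sub_left volume c).setLIntegral_comp_preimage_emb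
    (MeasurableEquiv.subLeft c).measurableEmbedding g (Ioo (c - u) (c - l))
  rwa [preimage_const_sub_Ioo, sub_sub_cancel, sub_sub_cancel] at this

section EvenReflection

variable {g : ℕ → ℝ → ℝ≥0∞} {b : ℝ}

theorem lintegral_strip_succ
    (hrefl : ∀ (n : ℕ) y, y ≤ -(n * b) → g (n + 1) y = g n (-2 * n * b - y)) (n : ℕ) :
    ∫⁻ y in Ioo (-(n * b) - b) (-(n * b)), g (n + 1) y
      = ∫⁻ y in Ioo (-(n * b)) (-(n * b) + b), g n y := by
  rw [setLIntegral_congr_fun measurableSet_Ioo fun y hy => hrefl n y hy.2.le,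
    lintegral_Ioo_comp_const_sub]
  congr 3 <;> ring

theorem lintegral_strip_eq_initial
    (hrefl : ∀ (n : ℕ) y, y ≤ -(n * b) → g (n + 1) y = g n (-2 * n * b - y)) (n : ℕ) :
    ∫⁻ y in Ioo (-(n * b)) (-(n * b) + b), g n y = ∫⁻ y in Ioo 0 b, g 0 y := by
  induction n with
  | zero => simp
  | succ n ih =>
    have hedge : -((n + 1 : ℕ) * b) = -(n * b) - b := by push_cast; ring
    rw [hedge, sub_add_cancel, lintegral_strip_succ hrefl, ih]

theorem lintegral_Ioo_succ_le
    (hstay : ∀ (n : ℕ) y, -(n * b) ≤ y → g (n + 1) y = g n y)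
    (hrefl : ∀ (n : ℕ) y, y ≤ -(n * b) → g (n + 1) y = g n (-2 * n * b - y)) (a : ℝ) (n : ℕ) :
    ∫⁻ y in Ioo (-((n + 1 : ℕ) * b)) a, g (n + 1) y
      ≤ (∫⁻ y in Ioo (-(n * b)) a, g n y) + ∫⁻ y in Ioo 0 b, g 0 y := by
  have hedge : -((n + 1 : ℕ) * b) = -(n * b) - b := by push_cast; ring
  calc ∫⁻ y in Ioo (-((n + 1 : ℕ) * b)) a, g (n + 1) y
      ≤ ∫⁻ y in Ioo (-(n * b) - b) (-(n * b)) ∪ Ico (-(n * b)) a, g (n + 1) y := by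
        rw [hedge]; exact lintegral_mono_set Ioo_subset_Ioo_union_Ico
    _ ≤ (∫⁻ y in Ioo (-(n * b) - b) (-(n * b)), g (n + 1) y)
          + ∫⁻ y in Ico (-(n * b)) a, g (n + 1) y := lintegral_union_le _ _ _
    _ = (∫⁻ y in Ioo 0 b, g 0 y) + ∫⁻ y in Ioo (-(n * b)) a, g n y := by
        rw [lintegral_strip_succ hrefl, lintegral_strip_eq_initial hrefl,
          setLIntegral_congr_fun measurableSet_Ico fun y hy => hstay n y hy.1,
          ← setLIntegral_congr Ioo_ae_eq_Ico]
    _ = _ := add_comm _ _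

theorem lintegral_Ioo_le_succ_mul
    (hstay : ∀ (n : ℕ) y, -(n * b) ≤ y → g (n + 1) y = g n y)
    (hrefl : ∀ (n : ℕ) y, y ≤ -(n * b) → g (n + 1) y = g n (-2 * n * b - y))
    {a : ℝ} (hba : b ≤ a) (n : ℕ) :
    ∫⁻ y in Ioo (-(n * b)) a, g n y ≤ (n + 1) * ∫⁻ y in Ioo 0 a, g 0 y := by
  induction n with
  | zero => simp
  | succ n ih =>
    calc ∫⁻ y in Ioo (-((n + 1 : ℕ) * b)) a, g (n + 1) y
        ≤ (∫⁻ y in Ioo (-(n * b)) a, g n y) + ∫⁻ y in Ioo 0 b, g 0 y :=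
          lintegral_Ioo_succ_le hstay hrefl a n
      _ ≤ (n + 1) * (∫⁻ y in Ioo 0 a, g 0 y) + ∫⁻ y in Ioo 0 a, g 0 y :=
          add_le_add ih (lintegral_mono_set (Ioo_subset_Ioo_right hba))
      _ = ((n + 1 : ℕ) + 1) * ∫⁻ y in Ioo 0 a, g 0 y := by push_cast; ring

end EvenReflection

theorem reflection_mem_Ioo {a b t y : ℝ} (hba : b ≤ a) (ht : 1 ≤ t)
    (hy : y ∈ Ioo (-(t * b)) (-((t - 1) * b))) :
    -y - 2 * (t - 1) * b ∈ Ioo (-((t - 1) * b)) a := by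
  obtain ⟨hlo, hhi⟩ := hy
  have hb : 0 < b := by linarith
  constructor <;> nlinarith

theorem iterated_reflection_L2_bound_general (a b : ℝ) (hba : b ≤ a)
    (φ : ℕ → ℝ → ℝ)
    (hrec₁ : ∀ n : ℕ, 1 ≤ n → ∀ y : ℝ, -(((n : ℝ) - 1) * b) < y → φ n y = φ (n - 1) y)
    (hrec₂ : ∀ n : ℕ, 1 ≤ n → ∀ y : ℝ, y ≤ -(((n : ℝ) - 1) * b) →
      φ n y = φ (n - 1) (-y - 2 * ((n : ℝ) - 1) * b)) :
    (∀ n : ℕ, 1 ≤ n → ∀ y ∈ Ioo (-((n : ℝ) * b)) (-(((n : ℝ) - 1) * b)),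
        -y - 2 * ((n : ℝ) - 1) * b ∈ Ioo (-(((n : ℝ) - 1) * b)) a) ∧
    ∀ n : ℕ, ∫⁻ y in Ioo (-((n : ℝ) * b)) a, ENNReal.ofReal ((φ n y) ^ 2)
      ≤ ((n : ℝ≥0∞) + 1) * ∫⁻ y in Ioo (0 : ℝ) a, ENNReal.ofReal ((φ 0 y) ^ 2) := by
  have hrefl : ∀ (n : ℕ) y, y ≤ -(n * b) → φ (n + 1) y = φ n (-2 * n * b - y) := by
    intro n y hy
    have h := hrec₂ (n + 1) (by omega) y (by simpa using hy)
    simp only [Nat.add_sub_cancel, Nat.cast_add_one, add_sub_cancel_right] at h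
    rw [h]
    congr 1
    ring
  have hstay : ∀ (n : ℕ) y, -(n * b) ≤ y → φ (n + 1) y = φ n y := by
    intro n y hy
    rcases hy.lt_or_eq with hlt | rfl
    · simpa using hrec₁ (n + 1) (by omega) y (by simpa using hlt)
    · rw [hrefl n _ le_rfl]
      congr 1
      ring
  exact ⟨fun n hn y hy => reflection_mem_Ioo hba (by exact_mod_cast hn) hy,
    lintegral_Ioo_le_succ_mul (g := fun n y => ENNReal.ofReal (φ n y ^ 2))
      (fun n y hy => by rw [hstay n y hy]) (fun n y hy => by rw [hrefl n y hy]) hba⟩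

/-- Iterated even reflections: starting from `φ 0 = φ₀ ∈ L²(0,a)` and
`0 < b ≤ a`, the function `φ n` extends `φ (n-1)` from `(-(n-1)b, a)` to `(-nb, a)` by
even reflection about the point `-(n-1)b`. Then each reflection is well defined (the
reflected argument lies in the domain of `φ (n-1)`) and
`∫_{-nb}^a |φ n|² ≤ (n+1) ∫₀^a |φ₀|²`. -/
theorem iterated_reflection_L2_bound (a b : ℝ) (ha : 0 < a) (hb : 0 < b) (hba : b ≤ a)
    (φ : ℕ → ℝ → ℝ)
    (hφ₀ : MemLp (φ 0) 2 (volume.restrict (Ioo 0 a)))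
    (hrec₁ : ∀ n : ℕ, 1 ≤ n → ∀ y : ℝ, -(((n : ℝ) - 1) * b) < y → φ n y = φ (n - 1) y)
    (hrec₂ : ∀ n : ℕ, 1 ≤ n → ∀ y : ℝ, y ≤ -(((n : ℝ) - 1) * b) →
      φ n y = φ (n - 1) (-y - 2 * ((n : ℝ) - 1) * b)) :
    (∀ n : ℕ, 1 ≤ n → ∀ y ∈ Ioo (-((n : ℝ) * b)) (-(((n : ℝ) - 1) * b)),
        -y - 2 * ((n : ℝ) - 1) * b ∈ Ioo (-(((n : ℝ) - 1) * b)) a) ∧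
    ∀ n : ℕ, ∫⁻ y in Ioo (-((n : ℝ) * b)) a, ENNReal.ofReal ((φ n y) ^ 2)
      ≤ ((n : ℝ≥0∞) + 1) * ∫⁻ y in Ioo (0 : ℝ) a, ENNReal.ofReal ((φ 0 y) ^ 2) :=
  iterated_reflection_L2_bound_general a b hba φ hrec₁ hrec₂
end

section
/- Let g, h : (0,1) → ℝ be measurable with 0 < g₀ ≤ g(x) ≤ g₁ and 0 ≤ h(x) ≤ h₁ for all x ∈ (0,1), and let ε > 0 satisfy ε h₁ ≤ g₀. Set Ω = {(x₁,x₂) ∈ ℝ² : 0 < x₁ < 1, 0 < x₂ < g(x₁)} and θ = {(x₁,x₂) : 0 < x₁ < 1, g(x₁) − εh(x₁) < x₂ < g(x₁)}. Then for every continuously differentiable u : ℝ² → ℝ, (1/ε) ∫_θ |u|² ≤ 2h₁ ( ∫₀¹ |u(x₁,0)|² dx₁ + g₁ ∫_Ω |∂u/∂x₂|² ). -/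
/-!
On the vertical line through `x`, `u (x, y) = u (x, 0) + ∫₀^y ∂₂u`, so Cauchy–Schwarz gives
`u (x, y)² ≤ 2 u (x, 0)² + 2 g₁ ∫₀^{g x} |∂₂u|²` for `0 ≤ y ≤ g x ≤ g₁`. The fibre of `θ` over `x`
has length `ε h x ≤ ε h₁` and lies in `[0, g x]` because `ε h₁ ≤ g₀`; integrating the pointwise
bound over it and then over `x ∈ (0, 1)` (Fubini for regions between two graphs) gives the claim.
-/

open MeasureTheory Set

/- The quadratic `c ↦ ∫ (f - c)²` is nonnegative, so its discriminant is nonpositive. -/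
theorem sq_integral_le_measureReal_mul_integral_sq {α : Type*} [MeasurableSpace α]
    {μ : Measure α} [IsFiniteMeasure μ] {f : α → ℝ}
    (hf : Integrable f μ) (hf2 : Integrable (fun x => f x ^ 2) μ) :
    (∫ x, f x ∂μ) ^ 2 ≤ μ.real univ * ∫ x, f x ^ 2 ∂μ := by
  have hquad : ∀ c : ℝ,
      0 ≤ μ.real univ * (c * c) + -(2 * ∫ x, f x ∂μ) * c + ∫ x, f x ^ 2 ∂μ := by
    intro c
    have hlin : Integrable (fun x => f x ^ 2 - 2 * c * f x) μ := hf2.sub (hf.const_mul _)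
    have hexpand : ∫ x, (f x - c) ^ 2 ∂μ
        = ∫ x, f x ^ 2 ∂μ - 2 * c * ∫ x, f x ∂μ + μ.real univ * c ^ 2 := by
      rw [show (fun x => (f x - c) ^ 2) = fun x => f x ^ 2 - 2 * c * f x + c ^ 2 by
          ext x; ring,
        integral_add hlin (integrable_const _), integral_sub hf2 (hf.const_mul _),
        integral_const_mul, integral_const, smul_eq_mul]
    have : 0 ≤ ∫ x, (f x - c) ^ 2 ∂μ := integral_nonneg fun x => sq_nonneg (f x - c)
    nlinarith
  have := discrim_le_zero hquad
  rw [discrim] at this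
  nlinarith

theorem Continuous.integrableOn_regionBetween {E : Type*} [NormedAddCommGroup E]
    {F : ℝ × ℝ → E} (hF : Continuous F) {f g : ℝ → ℝ} {s : Set ℝ} {a b c d : ℝ}
    (hs : s ⊆ Icc a b) (hf : ∀ x ∈ s, c ≤ f x) (hg : ∀ x ∈ s, g x ≤ d) :
    IntegrableOn F (regionBetween f g s) := by
  refine (hF.continuousOn.integrableOn_compact (isCompact_Icc.prod isCompact_Icc)).mono_set
    (t := Icc a b ×ˢ Icc c d) ?_
  rintro ⟨x, y⟩ ⟨hx, hy⟩
  exact ⟨hs hx, (hf x hx).trans hy.1.le, hy.2.le.trans (hg x hx)⟩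

section RegionBetween

variable {α E : Type*} [NormedAddCommGroup E] [NormedSpace ℝ E] {f g : α → ℝ} {s : Set α}
  {F : α × ℝ → E}

theorem integral_indicator_regionBetween_mk (x : α) :
    ∫ y, (regionBetween f g s).indicator F (x, y)
      = s.indicator (fun x => ∫ y in Ioo (f x) (g x), F (x, y)) x := by
  by_cases hx : x ∈ s
  · rw [indicator_of_mem hx, ← integral_indicator measurableSet_Ioo]
    congr 1 with y
    simp only [indicator, regionBetween, mem_ofPred_eq, hx, true_and]
  · simp [indicator, regionBetween, hx]

variable [MeasurableSpace α] {μ : Measure α}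

theorem integrableOn_integral_Ioo_of_integrableOn_regionBetween (hf : Measurable f)
    (hg : Measurable g) (hs : MeasurableSet s)
    (hF : IntegrableOn F (regionBetween f g s) (μ.prod volume)) :
    IntegrableOn (fun x => ∫ y in Ioo (f x) (g x), F (x, y)) s μ := by
  rw [← integrable_indicator_iff hs]
  simpa only [integral_indicator_regionBetween_mk] using
    ((integrable_indicator_iff (measurableSet_regionBetween hf hg hs)).2 hF).integral_prod_left

theorem setIntegral_regionBetween [SFinite μ] (hf : Measurable f) (hg : Measurable g)
    (hs : MeasurableSet s) (hF : IntegrableOn F (regionBetween f g s) (μ.prod volume)) :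
    ∫ p in regionBetween f g s, F p ∂μ.prod volume
      = ∫ x in s, (∫ y in Ioo (f x) (g x), F (x, y)) ∂μ := by
  have hmeas := measurableSet_regionBetween hf hg hs
  rw [← integral_indicator hmeas, integral_prod _ ((integrable_indicator_iff hmeas).2 hF),
    ← integral_indicator hs]
  simp only [integral_indicator_regionBetween_mk]

theorem setIntegral_regionBetween_le [SFinite μ] {F : α × ℝ → ℝ} {K : α → ℝ}
    (hf : Measurable f) (hg : Measurable g) (hs : MeasurableSet s)
    (hF : IntegrableOn F (regionBetween f g s) (μ.prod volume)) (hK : IntegrableOn K s μ)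
    (hFK : ∀ x ∈ s, ∫ y in Ioo (f x) (g x), F (x, y) ≤ K x) :
    ∫ p in regionBetween f g s, F p ∂μ.prod volume ≤ ∫ x in s, K x ∂μ := by
  rw [setIntegral_regionBetween hf hg hs hF]
  exact setIntegral_mono_on (integrableOn_integral_Ioo_of_integrableOn_regionBetween hf hg hs hF)
    hK hs hFK

end RegionBetween

namespace ContDiff

variable {φ : ℝ → ℝ}

theorem sq_le_two_mul_sq_zero_add_integral_deriv_sq (hφ : ContDiff ℝ 1 φ) {y b : ℝ}
    (hy : 0 ≤ y) (hyb : y ≤ b) :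
    φ y ^ 2 ≤ 2 * φ 0 ^ 2 + 2 * y * ∫ t in Ioo 0 b, deriv φ t ^ 2 := by
  have hφ' : Continuous (deriv φ) := hφ.continuous_deriv le_rfl
  have hftc : φ y - φ 0 = ∫ t in Ioc 0 y, deriv φ t := by
    rw [← intervalIntegral.integral_of_le hy, intervalIntegral.integral_deriv_eq_sub
      (fun t _ => (hφ.differentiable one_ne_zero).differentiableAt)
      (hφ'.intervalIntegrable 0 y)]
  have hcs : (∫ t in Ioc 0 y, deriv φ t) ^ 2 ≤ y * ∫ t in Ioc 0 y, deriv φ t ^ 2 := by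
    have := sq_integral_le_measureReal_mul_integral_sq (μ := volume.restrict (Ioc 0 y))
      (hφ'.integrableOn_Icc.mono_set Ioc_subset_Icc_self)
      ((hφ'.pow 2).integrableOn_Icc.mono_set Ioc_subset_Icc_self)
    rwa [measureReal_restrict_apply_univ, Real.volume_real_Ioc, max_eq_left (by linarith),
      sub_zero] at this
  have hmono : ∫ t in Ioc 0 y, deriv φ t ^ 2 ≤ ∫ t in Ioo 0 b, deriv φ t ^ 2 :=
    setIntegral_mono_set ((hφ'.pow 2).integrableOn_Icc.mono_set Ioo_subset_Icc_self)
      (Filter.Eventually.of_forall fun t => sq_nonneg _)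
      ((Ioc_subset_Ioc_right hyb).eventuallyLE.trans Ioo_ae_eq_Ioc.symm.le)
  calc φ y ^ 2 = (φ 0 + ∫ t in Ioc 0 y, deriv φ t) ^ 2 := by rw [← hftc, add_sub_cancel]
    _ ≤ 2 * (φ 0 ^ 2 + (∫ t in Ioc 0 y, deriv φ t) ^ 2) := add_sq_le
    _ ≤ 2 * φ 0 ^ 2 + 2 * y * ∫ t in Ioo 0 b, deriv φ t ^ 2 := by
        nlinarith [mul_le_mul_of_nonneg_left hmono hy]

theorem integral_sq_Ioo_le (hφ : ContDiff ℝ 1 φ) {a b B L : ℝ} (ha : 0 ≤ a) (hab : a ≤ b)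
    (hbB : b ≤ B) (hL : b - a ≤ L) :
    ∫ y in Ioo a b, φ y ^ 2 ≤ L * (2 * φ 0 ^ 2 + 2 * B * ∫ t in Ioo 0 b, deriv φ t ^ 2) := by
  have hK : 0 ≤ 2 * φ 0 ^ 2 + 2 * B * ∫ t in Ioo 0 b, deriv φ t ^ 2 := by
    have : 0 ≤ B := by linarith
    positivity
  calc ∫ y in Ioo a b, φ y ^ 2
      ≤ ∫ _ in Ioo a b, 2 * φ 0 ^ 2 + 2 * B * ∫ t in Ioo 0 b, deriv φ t ^ 2 := by
        refine setIntegral_mono_on ((hφ.continuous.pow 2).integrableOn_Icc.mono_set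
          Ioo_subset_Icc_self) (integrableOn_const measure_Ioo_lt_top.ne) measurableSet_Ioo
          fun y hy => ?_
        refine (hφ.sq_le_two_mul_sq_zero_add_integral_deriv_sq (ha.trans hy.1.le) hy.2.le).trans ?_
        gcongr
        linarith [hy.2]
    _ = (b - a) * (2 * φ 0 ^ 2 + 2 * B * ∫ t in Ioo 0 b, deriv φ t ^ 2) := by
        rw [setIntegral_const, Real.volume_real_Ioo, max_eq_left (by linarith), smul_eq_mul]
    _ ≤ L * (2 * φ 0 ^ 2 + 2 * B * ∫ t in Ioo 0 b, deriv φ t ^ 2) := by gcongr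

end ContDiff

theorem ContDiff.continuous_deriv_snd {E F : Type*} [NormedAddCommGroup E] [NormedSpace ℝ E]
    [NormedAddCommGroup F] [NormedSpace ℝ F] {u : E × ℝ → F} (hu : ContDiff ℝ 1 u) :
    Continuous fun p : E × ℝ => deriv (fun t => u (p.1, t)) p.2 := by
  have hline (p : E × ℝ) : HasDerivAt (fun t => u (p.1, t)) (fderiv ℝ u p (0, 1)) p.2 :=
    ((hu.differentiable one_ne_zero p).hasFDerivAt).comp_hasDerivAt p.2
      ((hasDerivAt_const p.2 p.1).prodMk (hasDerivAt_id p.2))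
  simp_rw [fun p => (hline p).deriv]
  exact (hu.continuous_fderiv one_ne_zero).clm_apply continuous_const

theorem concentrated_integral_trace_bound_general (g₀ g₁ h₁ ε : ℝ) (g h : ℝ → ℝ)
    (hg_meas : Measurable g) (hh_meas : Measurable h)
    (hg_bd : ∀ x ∈ Ioo (0 : ℝ) 1, g₀ ≤ g x ∧ g x ≤ g₁)
    (hh_bd : ∀ x ∈ Ioo (0 : ℝ) 1, 0 ≤ h x ∧ h x ≤ h₁)
    (hε : 0 < ε) (hεh : ε * h₁ ≤ g₀)
    (u : ℝ × ℝ → ℝ) (hu : ContDiff ℝ 1 u) :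
    (1 / ε) * ∫ p in {q : ℝ × ℝ | q.1 ∈ Ioo (0 : ℝ) 1 ∧
        q.2 ∈ Ioo (g q.1 - ε * h q.1) (g q.1)}, (u p) ^ 2
      ≤ 2 * h₁ * ((∫ x in Ioo (0 : ℝ) 1, (u (x, 0)) ^ 2) +
          g₁ * ∫ p in {q : ℝ × ℝ | q.1 ∈ Ioo (0 : ℝ) 1 ∧ q.2 ∈ Ioo (0 : ℝ) (g q.1)},
            (deriv (fun t => u (p.1, t)) p.2) ^ 2) := by
  have hlow (x) (hx : x ∈ Ioo (0 : ℝ) 1) : 0 ≤ g x - ε * h x := by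
    nlinarith [hg_bd x hx, hh_bd x hx]
  have hup (x) (hx : x ∈ Ioo (0 : ℝ) 1) : g x ≤ g₁ := (hg_bd x hx).2
  -- `θ` and `Ω` are definitionally `regionBetween (g - ε h) g (Ioo 0 1)` and
  -- `regionBetween 0 g (Ioo 0 1)`.
  have hΩint : IntegrableOn (fun p => deriv (fun t => u (p.1, t)) p.2 ^ 2)
      (regionBetween (fun _ => 0) g (Ioo 0 1)) :=
    (hu.continuous_deriv_snd.pow 2).integrableOn_regionBetween Ioo_subset_Icc_self
      (fun _ _ => le_rfl) hup
  have hΩ := setIntegral_regionBetween measurable_const hg_meas measurableSet_Ioo hΩint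
  have hGint := integrableOn_integral_Ioo_of_integrableOn_regionBetween measurable_const hg_meas
    measurableSet_Ioo hΩint
  have hbase : IntegrableOn (fun x => u (x, 0) ^ 2) (Ioo 0 1) :=
    ((hu.continuous.comp (continuous_id.prodMk continuous_const)).pow 2).integrableOn_Icc.mono_set
      Ioo_subset_Icc_self
  set G : ℝ → ℝ := fun x => ∫ y in Ioo 0 (g x), deriv (fun t => u (x, t)) y ^ 2
  have hK : IntegrableOn (fun x => ε * h₁ * (2 * u (x, 0) ^ 2 + 2 * g₁ * G x)) (Ioo 0 1) :=
    ((hbase.const_mul 2).add (hGint.const_mul (2 * g₁))).const_mul (ε * h₁)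
  have hθ := setIntegral_regionBetween_le (f := fun x => g x - ε * h x)
    (hg_meas.sub (hh_meas.const_mul ε)) hg_meas measurableSet_Ioo
    ((hu.continuous.pow 2).integrableOn_regionBetween Ioo_subset_Icc_self hlow hup)
    hK fun x hx => by
      refine (hu.comp (contDiff_const.prodMk contDiff_id)).integral_sq_Ioo_le (hlow x hx)
        (sub_le_self _ (mul_nonneg hε.le (hh_bd x hx).1)) (hup x hx) ?_
      rw [sub_sub_cancel]
      exact mul_le_mul_of_nonneg_left (hh_bd x hx).2 hε.le
  rw [integral_const_mul, integral_add (hbase.const_mul 2) (hGint.const_mul _),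
    integral_const_mul, integral_const_mul] at hθ
  calc (1 / ε) * ∫ p in _, u p ^ 2
      ≤ (1 / ε) * (ε * h₁ *
          (2 * (∫ x in Ioo 0 1, u (x, 0) ^ 2) + 2 * g₁ * ∫ x in Ioo 0 1, G x)) := by
        gcongr
        exact hθ
    _ = _ := by
        rw [← hΩ]
        field_simp
        rfl

/-- Let `0 < g₀ ≤ g ≤ g₁` and `0 ≤ h ≤ h₁` on `(0,1)` be measurable, and
`ε > 0` with `ε h₁ ≤ g₀`. With `Ω = {(x₁,x₂) : 0 < x₁ < 1, 0 < x₂ < g x₁}` and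
`θ = {(x₁,x₂) : 0 < x₁ < 1, g x₁ - ε h x₁ < x₂ < g x₁}`, every `C¹` function
`u : ℝ² → ℝ` satisfies
`(1/ε) ∫_θ |u|² ≤ 2h₁ (∫₀¹ |u(x₁,0)|² dx₁ + g₁ ∫_Ω |∂u/∂x₂|²)`. -/
theorem concentrated_integral_trace_bound (g₀ g₁ h₁ ε : ℝ) (g h : ℝ → ℝ)
    (hg_meas : Measurable g) (hh_meas : Measurable h) (hg₀ : 0 < g₀)
    (hg_bd : ∀ x ∈ Ioo (0 : ℝ) 1, g₀ ≤ g x ∧ g x ≤ g₁)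
    (hh_bd : ∀ x ∈ Ioo (0 : ℝ) 1, 0 ≤ h x ∧ h x ≤ h₁)
    (hε : 0 < ε) (hεh : ε * h₁ ≤ g₀)
    (u : ℝ × ℝ → ℝ) (hu : ContDiff ℝ 1 u) :
    (1 / ε) * ∫ p in {q : ℝ × ℝ | q.1 ∈ Ioo (0 : ℝ) 1 ∧
        q.2 ∈ Ioo (g q.1 - ε * h q.1) (g q.1)}, (u p) ^ 2
      ≤ 2 * h₁ * ((∫ x in Ioo (0 : ℝ) 1, (u (x, 0)) ^ 2) +
          g₁ * ∫ p in {q : ℝ × ℝ | q.1 ∈ Ioo (0 : ℝ) 1 ∧ q.2 ∈ Ioo (0 : ℝ) (g q.1)},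
            (deriv (fun t => u (p.1, t)) p.2) ^ 2) :=
  concentrated_integral_trace_bound_general g₀ g₁ h₁ ε g h hg_meas hh_meas hg_bd hh_bd hε hεh u hu
end

section
/- Let g, h : (0,1) → ℝ be measurable with 0 < g₀ ≤ g(x) ≤ g₁ and 0 ≤ h(x) ≤ h₁ for all x ∈ (0,1), and let ε > 0 satisfy ε h₁ ≤ g₀. Set Ω = {(x₁,x₂) ∈ ℝ² : 0 < x₁ < 1, 0 < x₂ < g(x₁)} and θ = {(x₁,x₂) : 0 < x₁ < 1, g(x₁) − εh(x₁) < x₂ < g(x₁)}. Then there exists a constant C > 0, depending only on g₀, g₁ and h₁ (in particular independent of ε and u), such that for every continuously differentiable u : ℝ² → ℝ, (1/ε) ∫_θ |u|² ≤ C ( ∫_Ω |u|² + ∫_Ω |∂u/∂x₂|² ). -/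
/-!
On a vertical fibre `f = u (x, ·)` over `(0, g x)`, the fundamental theorem of calculus for `f ^ 2`
and `2 |f f'| ≤ f ^ 2 + f' ^ 2` give `f y ^ 2 ≤ f z ^ 2 + ∫ (f ^ 2 + f' ^ 2)`; taking `z` where
`f ^ 2` is below its mean bounds `f ^ 2` on the fibre by `(g₀⁻¹ + 1) ∫ (f ^ 2 + f' ^ 2)`. Because
`ε h₁ ≤ g₀`, the piece of the fibre lying in `θ` is a subinterval of `(0, g x)` of length at most
`ε h₁`, and Tonelli over `x` gives the bound with `C = (g₀⁻¹ + 1) h₁ + 1`.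
-/

open MeasureTheory Set

theorem sq_le_sq_add_setIntegral_Ioo {f : ℝ → ℝ} (hf : ContDiff ℝ 1 f) {a b y z : ℝ}
    (hy : y ∈ Ioo a b) (hz : z ∈ Ioo a b) :
    f y ^ 2 ≤ f z ^ 2 + ∫ t in Ioo a b, (f t ^ 2 + deriv f t ^ 2) := by
  have hfc := hf.continuous
  have hdc := hf.continuous_deriv le_rfl
  have hftc : ∫ t in z..y, 2 * f t * deriv f t = f y ^ 2 - f z ^ 2 :=
    intervalIntegral.integral_eq_sub_of_hasDerivAt
      (fun t _ => by simpa using (hf.differentiable one_ne_zero t).hasDerivAt.pow 2)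
      (((continuous_const.mul hfc).mul hdc).intervalIntegrable _ _)
  have hsub : uIoc z y ⊆ Ioo a b := fun t ht =>
    ⟨(lt_min hz.1 hy.1).trans ht.1, ht.2.trans_lt (max_lt hz.2 hy.2)⟩
  have hdiff := calc f y ^ 2 - f z ^ 2
      ≤ ‖∫ t in z..y, 2 * f t * deriv f t‖ := hftc ▸ le_abs_self _
    _ ≤ ∫ t in uIoc z y, ‖2 * f t * deriv f t‖ :=
        intervalIntegral.norm_integral_le_integral_norm_uIoc
    _ ≤ ∫ t in uIoc z y, (f t ^ 2 + deriv f t ^ 2) := by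
        refine setIntegral_mono_on ((continuous_const.mul hfc).mul hdc).norm.integrableOn_uIoc
          ((hfc.pow 2).add (hdc.pow 2)).integrableOn_uIoc measurableSet_uIoc fun t _ => ?_
        simpa [abs_mul, mul_assoc, sq_abs] using two_mul_le_add_sq |f t| |deriv f t|
    _ ≤ ∫ t in Ioo a b, (f t ^ 2 + deriv f t ^ 2) :=
        setIntegral_mono_set (((hfc.pow 2).add (hdc.pow 2)).integrableOn_Icc.mono_set
          Ioo_subset_Icc_self) (.of_forall fun t => by positivity) (.of_forall hsub)
  linarith

theorem sq_le_mul_setIntegral_Ioo {f : ℝ → ℝ} (hf : ContDiff ℝ 1 f) {a b y : ℝ}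
    (hy : y ∈ Ioo a b) :
    f y ^ 2 ≤ ((b - a)⁻¹ + 1) * ∫ t in Ioo a b, (f t ^ 2 + deriv f t ^ 2) := by
  have hab : a < b := hy.1.trans hy.2
  have hfc := hf.continuous
  have hdc := hf.continuous_deriv le_rfl
  have hsq : IntegrableOn (fun t => f t ^ 2) (Ioo a b) :=
    (hfc.pow 2).integrableOn_Icc.mono_set Ioo_subset_Icc_self
  have hsq_le : ∫ t in Ioo a b, f t ^ 2 ≤ ∫ t in Ioo a b, (f t ^ 2 + deriv f t ^ 2) :=
    setIntegral_mono hsq (((hfc.pow 2).add (hdc.pow 2)).integrableOn_Icc.mono_set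
      Ioo_subset_Icc_self) fun t => le_add_of_nonneg_right (sq_nonneg _)
  obtain ⟨z, hz, hz_le⟩ := exists_le_setAverage (s := Ioo a b) (μ := volume)
    (by simp [hab]) (by simp) hsq
  rw [setAverage_eq, Real.volume_real_Ioo_of_le hab.le, smul_eq_mul] at hz_le
  have hab_inv : 0 ≤ (b - a)⁻¹ := inv_nonneg.2 (sub_nonneg.2 hab.le)
  calc f y ^ 2 ≤ f z ^ 2 + ∫ t in Ioo a b, (f t ^ 2 + deriv f t ^ 2) :=
        sq_le_sq_add_setIntegral_Ioo hf hy hz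
    _ ≤ (b - a)⁻¹ * (∫ t in Ioo a b, (f t ^ 2 + deriv f t ^ 2)) +
          ∫ t in Ioo a b, (f t ^ 2 + deriv f t ^ 2) := by
        gcongr
        exact hz_le.trans (by gcongr)
    _ = ((b - a)⁻¹ + 1) * ∫ t in Ioo a b, (f t ^ 2 + deriv f t ^ 2) := by ring

theorem setLIntegral_sq_le {f : ℝ → ℝ} (hf : ContDiff ℝ 1 f) {a b : ℝ} {s : Set ℝ}
    (hs : s ⊆ Ioo a b) :
    ∫⁻ y in s, ENNReal.ofReal (f y ^ 2) ≤ volume s * ENNReal.ofReal ((b - a)⁻¹ + 1) *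
      ∫⁻ t in Ioo a b, ENNReal.ofReal (f t ^ 2 + deriv f t ^ 2) := by
  have hint : IntegrableOn (fun t => f t ^ 2 + deriv f t ^ 2) (Ioo a b) :=
    ((hf.continuous.pow 2).add ((hf.continuous_deriv le_rfl).pow 2)).integrableOn_Icc.mono_set
      Ioo_subset_Icc_self
  calc ∫⁻ y in s, ENNReal.ofReal (f y ^ 2)
      ≤ ∫⁻ _ in s, ENNReal.ofReal (((b - a)⁻¹ + 1) * ∫ t in Ioo a b, (f t ^ 2 + deriv f t ^ 2)) :=
        setLIntegral_mono measurable_const fun y hy =>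
          ENNReal.ofReal_le_ofReal (sq_le_mul_setIntegral_Ioo hf (hs hy))
    _ = volume s * ENNReal.ofReal ((b - a)⁻¹ + 1) *
          ∫⁻ t in Ioo a b, ENNReal.ofReal (f t ^ 2 + deriv f t ^ 2) := by
        rw [setLIntegral_const, ENNReal.ofReal_mul' (setIntegral_nonneg measurableSet_Ioo
          fun t _ => by positivity), ofReal_integral_eq_lintegral_ofReal hint
          (.of_forall fun t => by positivity)]
        ring

theorem setLIntegral_regionBetween {α : Type*} [MeasurableSpace α] {μ : Measure α}
    {f g : α → ℝ} {s : Set α} (hf : Measurable f) (hg : Measurable g) (hs : MeasurableSet s)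
    {F : α × ℝ → ENNReal} (hF : Measurable F) :
    ∫⁻ p in regionBetween f g s, F p ∂μ.prod volume =
      ∫⁻ x in s, (∫⁻ y in Ioo (f x) (g x), F (x, y)) ∂μ := by
  rw [← lintegral_indicator (measurableSet_regionBetween hf hg hs),
    lintegral_prod _ (hF.indicator (measurableSet_regionBetween hf hg hs)).aemeasurable,
    ← lintegral_indicator hs]
  congr 1 with x
  by_cases hx : x ∈ s
  · rw [indicator_of_mem hx, ← lintegral_indicator measurableSet_Ioo]
    congr 1 with y
    simp [indicator, regionBetween, hx]
  · simp [regionBetween, hx]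

theorem setLIntegral_regionBetween_sq_le {u : ℝ × ℝ → ℝ} (hu : ContDiff ℝ 1 u)
    {lo g : ℝ → ℝ} (hlo : Measurable lo) (hg : Measurable g) {s : Set ℝ} (hs : MeasurableSet s)
    {δ ℓ : ℝ} (hℓ : 0 < ℓ) (hlo_nonneg : ∀ x ∈ s, 0 ≤ lo x) (hgap : ∀ x ∈ s, g x - lo x ≤ δ)
    (hℓg : ∀ x ∈ s, ℓ ≤ g x) :
    ∫⁻ p in regionBetween lo g s, ENNReal.ofReal (u p ^ 2) ≤
      ENNReal.ofReal δ * ENNReal.ofReal (ℓ⁻¹ + 1) *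
        ∫⁻ p in regionBetween (fun _ => 0) g s,
          ENNReal.ofReal (u p ^ 2 + deriv (fun t => u (p.1, t)) p.2 ^ 2) := by
  have hsq : Continuous fun p => u p ^ 2 := hu.continuous.pow 2
  have hdsq : Continuous fun p : ℝ × ℝ => deriv (fun t => u (p.1, t)) p.2 ^ 2 :=
    hu.continuous_deriv_snd.pow 2
  have hsum : Continuous fun p : ℝ × ℝ => u p ^ 2 + deriv (fun t => u (p.1, t)) p.2 ^ 2 :=
    hsq.add hdsq
  rw [Measure.volume_eq_prod, setLIntegral_regionBetween hlo hg hs hsq.measurable.ennreal_ofReal,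
    setLIntegral_regionBetween measurable_const hg hs hsum.measurable.ennreal_ofReal,
    ← lintegral_const_mul' _ _ (by finiteness)]
  refine setLIntegral_mono' hs fun x hx => ?_
  calc ∫⁻ y in Ioo (lo x) (g x), ENNReal.ofReal (u (x, y) ^ 2)
      ≤ volume (Ioo (lo x) (g x)) * ENNReal.ofReal ((g x - 0)⁻¹ + 1) *
          ∫⁻ t in Ioo 0 (g x), ENNReal.ofReal (u (x, t) ^ 2 + deriv (fun t => u (x, t)) t ^ 2) :=
        setLIntegral_sq_le (hu.comp (contDiff_const.prodMk contDiff_id))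
          (Ioo_subset_Ioo_left (hlo_nonneg x hx))
    _ ≤ _ := by
        rw [Real.volume_Ioo, sub_zero]
        have hℓgx := hℓg x hx
        gcongr
        exact hgap x hx

theorem setIntegral_regionBetween_sq_le {u : ℝ × ℝ → ℝ} (hu : ContDiff ℝ 1 u)
    {lo g : ℝ → ℝ} (hlo : Measurable lo) (hg : Measurable g) {s : Set ℝ} (hs : MeasurableSet s)
    {δ ℓ : ℝ} (hδ : 0 ≤ δ) (hℓ : 0 < ℓ) (hlo_nonneg : ∀ x ∈ s, 0 ≤ lo x)
    (hgap : ∀ x ∈ s, g x - lo x ≤ δ) (hℓg : ∀ x ∈ s, ℓ ≤ g x)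
    (hint : IntegrableOn (fun p => u p ^ 2 + deriv (fun t => u (p.1, t)) p.2 ^ 2)
      (regionBetween (fun _ => 0) g s)) :
    ∫ p in regionBetween lo g s, u p ^ 2 ≤
      δ * (ℓ⁻¹ + 1) * ∫ p in regionBetween (fun _ => 0) g s,
        (u p ^ 2 + deriv (fun t => u (p.1, t)) p.2 ^ 2) := by
  have hI : 0 ≤ ∫ p in regionBetween (fun _ => 0) g s,
      (u p ^ 2 + deriv (fun t => u (p.1, t)) p.2 ^ 2) :=
    integral_nonneg fun p => by positivity
  rw [integral_eq_lintegral_of_nonneg_ae (.of_forall fun p => sq_nonneg _)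
    (hu.continuous.pow 2).aestronglyMeasurable]
  refine ENNReal.toReal_le_of_le_ofReal (by positivity) ?_
  rw [ENNReal.ofReal_mul' hI, ENNReal.ofReal_mul' (by positivity),
    ofReal_integral_eq_lintegral_ofReal hint (.of_forall fun p => by positivity)]
  exact setLIntegral_regionBetween_sq_le hu hlo hg hs hℓ hlo_nonneg hgap hℓg

theorem concentrated_integral_H1_bound_general (g₀ g₁ h₁ : ℝ) (hg₀ : 0 < g₀)
    (hh₁ : 0 ≤ h₁) :
    ∃ C : ℝ, 0 < C ∧
      ∀ g h : ℝ → ℝ, Measurable g → Measurable h →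
      (∀ x ∈ Ioo (0 : ℝ) 1, g₀ ≤ g x ∧ g x ≤ g₁) →
      (∀ x ∈ Ioo (0 : ℝ) 1, 0 ≤ h x ∧ h x ≤ h₁) →
      ∀ ε : ℝ, 0 < ε → ε * h₁ ≤ g₀ →
      ∀ u : ℝ × ℝ → ℝ, ContDiff ℝ 1 u →
      (1 / ε) * ∫ p in {q : ℝ × ℝ | q.1 ∈ Ioo (0 : ℝ) 1 ∧
          q.2 ∈ Ioo (g q.1 - ε * h q.1) (g q.1)}, (u p) ^ 2
        ≤ C * ((∫ p in {q : ℝ × ℝ | q.1 ∈ Ioo (0 : ℝ) 1 ∧ q.2 ∈ Ioo (0 : ℝ) (g q.1)},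
              (u p) ^ 2) +
            ∫ p in {q : ℝ × ℝ | q.1 ∈ Ioo (0 : ℝ) 1 ∧ q.2 ∈ Ioo (0 : ℝ) (g q.1)},
              (deriv (fun t => u (p.1, t)) p.2) ^ 2) := by
  refine ⟨(g₀⁻¹ + 1) * h₁ + 1, by positivity, fun g h hg hh hgb hhb ε hε hεh u hu => ?_⟩
  change 1 / ε * ∫ p in regionBetween (fun x => g x - ε * h x) g (Ioo 0 1), u p ^ 2 ≤ _ *
    ((∫ p in regionBetween (fun _ => 0) g (Ioo 0 1), u p ^ 2) +
      ∫ p in regionBetween (fun _ => 0) g (Ioo 0 1), deriv (fun t => u (p.1, t)) p.2 ^ 2)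
  set Ω := regionBetween (fun _ => 0) g (Ioo 0 1)
  have hΩ_integrable {φ : ℝ × ℝ → ℝ} (hφ : Continuous φ) : IntegrableOn φ Ω :=
    (hφ.continuousOn.integrableOn_compact (isCompact_Icc.prod isCompact_Icc)).mono_set
      fun p ⟨hx, hy⟩ => ⟨Ioo_subset_Icc_self hx, hy.1.le, hy.2.le.trans (hgb p.1 hx).2⟩
  have hsq : Continuous fun p => u p ^ 2 := hu.continuous.pow 2
  have hdsq : Continuous fun p : ℝ × ℝ => deriv (fun t => u (p.1, t)) p.2 ^ 2 :=
    hu.continuous_deriv_snd.pow 2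
  have hstrip := setIntegral_regionBetween_sq_le (lo := fun x => g x - ε * h x) hu
    (by fun_prop) hg measurableSet_Ioo (mul_nonneg hε.le hh₁) hg₀
    (fun x hx => by nlinarith [hgb x hx, hhb x hx]) (fun x hx => by nlinarith [hhb x hx])
    (fun x hx => (hgb x hx).1) (hΩ_integrable (hsq.add hdsq))
  rw [integral_add (hΩ_integrable hsq) (hΩ_integrable hdsq)] at hstrip
  calc 1 / ε * ∫ p in regionBetween (fun x => g x - ε * h x) g (Ioo 0 1), u p ^ 2
      ≤ (g₀⁻¹ + 1) * h₁ *
          ((∫ p in Ω, u p ^ 2) + ∫ p in Ω, deriv (fun t => u (p.1, t)) p.2 ^ 2) := by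
        rw [div_mul_eq_mul_div, one_mul, div_le_iff₀ hε]
        linarith
    _ ≤ _ := by gcongr; linarith

/-- Given `0 < g₀ ≤ g₁` and `h₁ ≥ 0`, there is a constant `C > 0`,
depending only on `g₀, g₁, h₁` (in particular independent of `ε`, `g`, `h` and `u`),
such that for all measurable `g, h` on `(0,1)` with `g₀ ≤ g ≤ g₁`, `0 ≤ h ≤ h₁`, and all
`ε > 0` with `ε h₁ ≤ g₀`, every `C¹` function `u : ℝ² → ℝ` satisfies
`(1/ε) ∫_θ |u|² ≤ C (∫_Ω |u|² + ∫_Ω |∂u/∂x₂|²)`, where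
`Ω = {(x₁,x₂) : 0 < x₁ < 1, 0 < x₂ < g x₁}` and
`θ = {(x₁,x₂) : 0 < x₁ < 1, g x₁ - ε h x₁ < x₂ < g x₁}`. -/
theorem concentrated_integral_H1_bound (g₀ g₁ h₁ : ℝ) (hg₀ : 0 < g₀) (hg₀₁ : g₀ ≤ g₁)
    (hh₁ : 0 ≤ h₁) :
    ∃ C : ℝ, 0 < C ∧
      ∀ g h : ℝ → ℝ, Measurable g → Measurable h →
      (∀ x ∈ Ioo (0 : ℝ) 1, g₀ ≤ g x ∧ g x ≤ g₁) →
      (∀ x ∈ Ioo (0 : ℝ) 1, 0 ≤ h x ∧ h x ≤ h₁) →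
      ∀ ε : ℝ, 0 < ε → ε * h₁ ≤ g₀ →
      ∀ u : ℝ × ℝ → ℝ, ContDiff ℝ 1 u →
      (1 / ε) * ∫ p in {q : ℝ × ℝ | q.1 ∈ Ioo (0 : ℝ) 1 ∧
          q.2 ∈ Ioo (g q.1 - ε * h q.1) (g q.1)}, (u p) ^ 2
        ≤ C * ((∫ p in {q : ℝ × ℝ | q.1 ∈ Ioo (0 : ℝ) 1 ∧ q.2 ∈ Ioo (0 : ℝ) (g q.1)},
              (u p) ^ 2) +
            ∫ p in {q : ℝ × ℝ | q.1 ∈ Ioo (0 : ℝ) 1 ∧ q.2 ∈ Ioo (0 : ℝ) (g q.1)},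
              (deriv (fun t => u (p.1, t)) p.2) ^ 2) :=
  concentrated_integral_H1_bound_general g₀ g₁ h₁ hg₀ hh₁
end

section
/- Let β > 0, let h : ℝ → ℝ be measurable, L_h-periodic with 0 ≤ h(x) ≤ h₁, and let g : (0,1) → ℝ be measurable with 0 < g₀ ≤ g(x) ≤ g₁. For ε > 0 with ε h₁ ≤ g₀, set θ_ε = {(x₁,x₂) : 0 < x₁ < 1, g(x₁) − ε h(x₁/ε^β) < x₂ < g(x₁)}. Then for every w ∈ L¹(0,1), (1/ε) ∫_{θ_ε} w(x₁) d(x₁,x₂) = ∫₀¹ h(x₁/ε^β) w(x₁) dx₁ → μ_h ∫₀¹ w(x₁) dx₁ as ε → 0⁺, where μ_h = (1/L_h)∫₀^{L_h} h(s) ds. -/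
open MeasureTheory Filter Set Topology

/-!
On the strip the fibre over `x₁` is an interval of length `ε h (x₁ / ε ^ β)`, so pushing the
restricted Lebesgue measure forward to the first coordinate gives the density
`ε h (x₁ / ε ^ β)`; this is the identity.

For the limit, `h₀ = h - μ_h` is periodic with zero mean, so its primitive is periodic and hence
bounded, and `∫ x in a..b, h₀ (x / δ) = δ * (bounded) → 0`. Partitioning into small cells on which
a continuous weight is almost constant passes this to continuous weights, and since `h₀` is
bounded, density of continuous compactly supported functions in `L¹` passes it to all `w`.
-/

section RegionBetween

variable {α E : Type*} [MeasurableSpace α] {μ : Measure α}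
  [NormedAddCommGroup E] [NormedSpace ℝ E] {f g : α → ℝ} {s : Set α}

theorem map_fst_restrict_regionBetween (hf : Measurable f) (hg : Measurable g)
    (hs : MeasurableSet s) :
    ((μ.prod volume).restrict (regionBetween f g s)).map Prod.fst =
      (μ.restrict s).withDensity fun x => ENNReal.ofReal (g x - f x) := by
  ext B hB
  have hpre : Prod.fst ⁻¹' B ∩ regionBetween f g s = regionBetween f g (B ∩ s) := by
    ext p
    simp only [regionBetween, mem_inter_iff, mem_preimage, mem_ofPred_eq, and_assoc]
  rw [Measure.map_apply measurable_fst hB, Measure.restrict_apply (measurable_fst hB), hpre,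
    volume_regionBetween_eq_lintegral' hf hg (hB.inter hs), withDensity_apply _ hB,
    Measure.restrict_restrict hB]
  rfl

theorem setIntegral_regionBetween_comp_fst (hf : Measurable f) (hg : Measurable g)
    (hs : MeasurableSet s) (hfg : ∀ x ∈ s, f x ≤ g x) {w : α → E}
    (hw : AEStronglyMeasurable w (μ.restrict s)) :
    ∫ p in regionBetween f g s, w p.1 ∂μ.prod volume = ∫ x in s, (g x - f x) • w x ∂μ := by
  have hdens : Measurable fun x => ENNReal.ofReal (g x - f x) :=
    ENNReal.measurable_ofReal.comp (hg.sub hf)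
  rw [← integral_map measurable_fst.aemeasurable, map_fst_restrict_regionBetween hf hg hs,
    integral_withDensity_eq_integral_toReal_smul hdens
      (ae_of_all _ fun _ => ENNReal.ofReal_lt_top)]
  · exact setIntegral_congr_fun hs fun x hx => by
      rw [ENNReal.toReal_ofReal (sub_nonneg.2 (hfg x hx))]
  · rw [map_fst_restrict_regionBetween hf hg hs]
    exact hw.mono_ac (withDensity_absolutelyContinuous _ _)

end RegionBetween

theorem tendsto_zero_of_forall_eventually_abs_sub_le {ι : Type*} {l : Filter ι} {I : ι → ℝ}
    (C : ℝ) (h : ∀ ε > 0, ∃ J : ι → ℝ, Tendsto J l (𝓝 0) ∧ ∀ᶠ i in l, |I i - J i| ≤ C * ε) :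
    Tendsto I l (𝓝 0) := by
  rw [Metric.tendsto_nhds]
  intro ε hε
  obtain ⟨J, hJ, hIJ⟩ := h (ε / (2 * (|C| + 1))) (by positivity)
  have hCε : C * (ε / (2 * (|C| + 1))) < ε / 2 := by
    rw [mul_div_assoc', div_lt_div_iff₀ (by positivity) two_pos]
    nlinarith [le_abs_self C]
  filter_upwards [hIJ, Metric.tendsto_nhds.1 hJ (ε / 2) (half_pos hε)] with i hi hJi
  rw [Real.dist_eq, sub_zero] at hJi ⊢
  linarith [abs_sub_abs_le_abs_sub (I i) (J i)]

theorem intervalIntegrable_of_abs_le_const {f : ℝ → ℝ} {c : ℝ} (hf : AEStronglyMeasurable f volume)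
    (hfc : ∀ x, |f x| ≤ c) (a b : ℝ) : IntervalIntegrable f volume a b :=
  intervalIntegrable_const.mono_fun' hf.restrict (ae_of_all _ hfc)

section Oscillating

variable {ι : Type*} {l : Filter ι} {φ : ι → ℝ → ℝ} {c : ℝ}

theorem abs_intervalIntegral_mul_sub_mul_le {f v : ℝ → ℝ} {s t ε : ℝ} (hst : s ≤ t)
    (hf : IntervalIntegrable f volume s t)
    (hfv : IntervalIntegrable (fun x => f x * v x) volume s t)
    (hfc : ∀ x, |f x| ≤ c) (hv : ∀ x ∈ Ioc s t, |v x - v s| ≤ ε) :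
    |(∫ x in s..t, f x * v x) - (∫ x in s..t, f x) * v s| ≤ c * ε * (t - s) := by
  have hc : 0 ≤ c := (abs_nonneg _).trans (hfc s)
  rw [← intervalIntegral.integral_mul_const, ← intervalIntegral.integral_sub hfv (hf.mul_const _),
    ← abs_of_nonneg (sub_nonneg.2 hst), ← Real.norm_eq_abs]
  refine intervalIntegral.norm_integral_le_of_norm_le_const fun x hx => ?_
  rw [uIoc_of_le hst] at hx
  rw [← mul_sub, norm_mul]
  exact mul_le_mul (hfc x) (hv x hx) (norm_nonneg _) hc

theorem abs_intervalIntegral_mul_sub_riemannSum_le {f v : ℝ → ℝ} {t : ℕ → ℝ} {m : ℕ} {ε : ℝ}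
    (ht : Monotone t) (hf : AEStronglyMeasurable f volume) (hfc : ∀ x, |f x| ≤ c)
    (hv : ContinuousOn v (Icc (t 0) (t m)))
    (hv_osc : ∀ k < m, ∀ x ∈ Ioc (t k) (t (k + 1)), |v x - v (t k)| ≤ ε) :
    |(∫ x in t 0..t m, f x * v x) -
        ∑ k ∈ Finset.range m, (∫ x in t k..t (k + 1), f x) * v (t k)| ≤
      c * ε * (t m - t 0) := by
  have hf_int := intervalIntegrable_of_abs_le_const hf hfc
  have hfv : ∀ k < m, IntervalIntegrable (fun x => f x * v x) volume (t k) (t (k + 1)) :=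
    fun k hk => (hf_int _ _).mul_continuousOn <| hv.mono <| by
      rw [uIcc_of_le (ht k.le_succ)]
      exact Icc_subset_Icc (ht k.zero_le) (ht hk)
  rw [← intervalIntegral.sum_integral_adjacent_intervals hfv, ← Finset.sum_sub_distrib,
    ← Finset.sum_range_sub, Finset.mul_sum]
  exact (Finset.abs_sum_le_sum_abs _ _).trans <| Finset.sum_le_sum fun k hk =>
    abs_intervalIntegral_mul_sub_mul_le (ht k.le_succ) (hf_int _ _)
      (hfv k (Finset.mem_range.1 hk)) hfc (hv_osc k (Finset.mem_range.1 hk))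

theorem tendsto_intervalIntegral_mul_of_continuousOn {a b : ℝ} (hab : a ≤ b)
    (hφm : ∀ i, AEStronglyMeasurable (φ i) volume) (hφc : ∀ i x, |φ i x| ≤ c)
    (hφ : ∀ s t, Tendsto (fun i => ∫ x in s..t, φ i x) l (𝓝 0))
    {v : ℝ → ℝ} (hv : ContinuousOn v (Icc a b)) :
    Tendsto (fun i => ∫ x in a..b, φ i x * v x) l (𝓝 0) := by
  refine tendsto_zero_of_forall_eventually_abs_sub_le (c * (b - a)) fun ε hε => ?_
  obtain ⟨η, hη, hv_unif⟩ := Metric.uniformContinuousOn_iff.1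
    (isCompact_Icc.uniformContinuousOn_of_continuous hv) ε hε
  obtain ⟨m, hm⟩ := exists_nat_gt ((b - a) / η)
  have hm0 : (0 : ℝ) < m := (div_nonneg (sub_nonneg.2 hab) hη.le).trans_lt hm
  have hmesh : (b - a) / m < η := by rwa [div_lt_comm₀ hm0 hη]
  set t : ℕ → ℝ := fun k => a + k * ((b - a) / m)
  have ht0 : t 0 = a := by simp [t]
  have htm : t m = b := by simp only [t]; field_simp; ring
  have ht : Monotone t := fun j k hjk => by simp only [t]; gcongr
  have hstep : ∀ k, t (k + 1) - t k = (b - a) / m := fun k => by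
    simp only [t]; push_cast; ring
  refine ⟨fun i => ∑ k ∈ Finset.range m, (∫ x in t k..t (k + 1), φ i x) * v (t k),
    by simpa using tendsto_finsetSum (Finset.range m) fun k _ => (hφ _ _).mul_const (v (t k)),
    Eventually.of_forall fun i => ?_⟩
  have hv_osc : ∀ k < m, ∀ x ∈ Ioc (t k) (t (k + 1)), |v x - v (t k)| ≤ ε := by
    intro k hk x hx
    have hcell : Icc (t k) (t (k + 1)) ⊆ Icc a b :=
      ht0 ▸ htm ▸ Icc_subset_Icc (ht k.zero_le) (ht hk)
    refine (hv_unif x (hcell (Ioc_subset_Icc_self hx)) _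
      (hcell (left_mem_Icc.2 (ht k.le_succ))) ?_).le
    rw [Real.dist_eq, abs_of_nonneg (by linarith [hx.1])]
    linarith [hx.2, hstep k]
  have := abs_intervalIntegral_mul_sub_riemannSum_le ht (hφm i) (hφc i) (ht0 ▸ htm ▸ hv) hv_osc
  rwa [ht0, htm, mul_right_comm] at this

theorem tendsto_integral_mul_of_integrable (hφm : ∀ i, AEStronglyMeasurable (φ i) volume)
    (hφc : ∀ i x, |φ i x| ≤ c) (hφ : ∀ s t, Tendsto (fun i => ∫ x in s..t, φ i x) l (𝓝 0))
    {w : ℝ → ℝ} (hw : Integrable w) :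
    Tendsto (fun i => ∫ x, φ i x * w x) l (𝓝 0) := by
  refine tendsto_zero_of_forall_eventually_abs_sub_le c fun ε hε => ?_
  obtain ⟨v, hv_supp, hwv, hv_cont, hv_int⟩ := hw.exists_hasCompactSupport_integral_sub_le hε
  obtain ⟨R, hR0, hR⟩ := hv_supp.isCompact.isBounded.subset_closedBall_lt 0 0
  rw [Real.closedBall_eq_Icc, zero_sub, zero_add] at hR
  have hvR : ∀ i, ∫ x, φ i x * v x = ∫ x in -R..R, φ i x * v x := fun i => by
    rw [intervalIntegral.integral_of_le (by linarith), ← integral_Icc_eq_integral_Ioc,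
      setIntegral_eq_integral_of_forall_compl_eq_zero fun x hx => by
        rw [image_eq_zero_of_notMem_tsupport fun h => hx (hR h), mul_zero]]
  refine ⟨fun i => ∫ x, φ i x * v x, ?_, Eventually.of_forall fun i => ?_⟩
  · simpa only [hvR] using tendsto_intervalIntegral_mul_of_continuousOn (by linarith) hφm hφc hφ
      hv_cont.continuousOn
  have hφ_bdd : ∀ᵐ x, ‖φ i x‖ ≤ c := ae_of_all _ (hφc i)
  rw [← integral_sub (hw.bdd_mul (hφm i) hφ_bdd) (hv_int.bdd_mul (hφm i) hφ_bdd),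
    ← Real.norm_eq_abs]
  calc ‖∫ x, φ i x * w x - φ i x * v x‖ ≤ ∫ x, c * ‖w x - v x‖ := by
        refine norm_integral_le_of_norm_le ((hw.sub hv_int).norm.const_mul c)
          (ae_of_all _ fun x => ?_)
        rw [← mul_sub, norm_mul]
        exact mul_le_mul_of_nonneg_right (hφc i x) (norm_nonneg _)
    _ ≤ c * ε := by
        rw [integral_const_mul]
        exact mul_le_mul_of_nonneg_left hwv ((abs_nonneg _).trans (hφc i 0))

end Oscillating

namespace Function.Periodic

variable {f : ℝ → ℝ} {T : ℝ}

theorem periodic_primitive (hf : Periodic f T)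
    (h_int : ∀ a b, IntervalIntegrable f volume a b) (h_zero : ∫ x in 0..T, f x = 0) :
    Periodic (fun t => ∫ x in 0..t, f x) T := fun t => by
  simp only [hf.intervalIntegral_add_eq_add 0 t h_int, zero_add, h_zero, add_zero]

theorem tendsto_intervalIntegral_comp_div (hf : Periodic f T) (hT : T ≠ 0)
    (h_int : ∀ a b, IntervalIntegrable f volume a b) (h_zero : ∫ x in 0..T, f x = 0) (a b : ℝ) :
    Tendsto (fun δ => ∫ x in a..b, f (x / δ)) (𝓝[≠] 0) (𝓝 0) := by
  set F : ℝ → ℝ := fun t => ∫ x in 0..t, f x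
  obtain ⟨C, hC⟩ := isBounded_iff_forall_norm_le.1
    ((hf.periodic_primitive h_int h_zero).isBounded_of_continuous hT
      (intervalIntegral.continuous_primitive h_int 0))
  have hrw : ∀ δ ≠ 0, ∫ x in a..b, f (x / δ) = δ * (F (b / δ) - F (a / δ)) := fun δ hδ => by
    rw [intervalIntegral.integral_comp_div _ hδ, smul_eq_mul,
      intervalIntegral.integral_interval_sub_left (h_int 0 _) (h_int 0 _)]
  rw [tendsto_congr' (eventually_nhdsWithin_of_forall (s := {0}ᶜ) hrw)]
  refine (tendsto_nhdsWithin_of_tendsto_nhds tendsto_id).zero_mul_isBoundedUnder_le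
    (isBoundedUnder_of ⟨C + C, fun δ => ?_⟩)
  exact (norm_sub_le _ _).trans (add_le_add (hC _ (mem_range_self _)) (hC _ (mem_range_self _)))

theorem tendsto_integral_comp_div_mul {h : ℝ → ℝ} {c : ℝ} (hh : Periodic h T) (hT : T ≠ 0)
    (hm : Measurable h) (hc : ∀ x, |h x| ≤ c) {w : ℝ → ℝ} (hw : Integrable w) :
    Tendsto (fun δ => ∫ x, h (x / δ) * w x) (𝓝[≠] 0)
      (𝓝 ((T⁻¹ * ∫ x in 0..T, h x) * ∫ x, w x)) := by
  set μ := T⁻¹ * ∫ x in 0..T, h x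
  set h₀ : ℝ → ℝ := fun x => h x - μ
  have h_int := intervalIntegrable_of_abs_le_const hm.aestronglyMeasurable hc
  have h₀_zero : ∫ x in 0..T, h₀ x = 0 := by
    rw [intervalIntegral.integral_sub (h_int 0 T) intervalIntegrable_const,
      intervalIntegral.integral_const, smul_eq_mul, sub_zero, mul_inv_cancel_left₀ hT, sub_self]
  have h₀_meas : ∀ δ : ℝ, Measurable fun x => h₀ (x / δ) := fun δ =>
    (hm.comp (measurable_id.div_const δ)).sub_const μ
  have h₀_bdd : ∀ y, |h₀ y| ≤ c + |μ| := fun y => (abs_sub _ _).trans (by linarith [hc y])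
  have h₀_per : Periodic h₀ T := fun x => by simp only [h₀, hh x]
  have hosc : Tendsto (fun δ => ∫ x, h₀ (x / δ) * w x) (𝓝[≠] 0) (𝓝 0) :=
    tendsto_integral_mul_of_integrable (fun δ => (h₀_meas δ).aestronglyMeasurable)
      (fun δ x => h₀_bdd _)
      (h₀_per.tendsto_intervalIntegral_comp_div hT
        (fun a b => (h_int a b).sub intervalIntegrable_const) h₀_zero) hw
  have hsplit : ∀ δ, ∫ x, h (x / δ) * w x = (∫ x, h₀ (x / δ) * w x) + μ * ∫ x, w x := fun δ => by
    rw [← integral_const_mul, ← integral_add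
      (hw.bdd_mul (h₀_meas δ).aestronglyMeasurable (ae_of_all _ fun x => h₀_bdd _))
      (hw.const_mul μ)]
    congr 1 with x
    ring
  simpa only [hsplit, zero_add] using hosc.add_const (μ * ∫ x, w x)

end Function.Periodic

theorem tendsto_rpow_nhdsGT_zero {β : ℝ} (hβ : 0 < β) :
    Tendsto (fun x : ℝ => x ^ β) (𝓝[>] 0) (𝓝[>] 0) := by
  refine tendsto_nhdsWithin_of_tendsto_nhds_of_eventually_within _ ?_
    (eventually_nhdsWithin_of_forall fun x hx => Real.rpow_pos_of_pos hx β)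
  simpa only [Real.zero_rpow hβ.ne'] using
    ((Real.continuousAt_rpow_const 0 β (Or.inr hβ.le)).tendsto).mono_left nhdsWithin_le_nhds

theorem concentrating_strip_average_general (β Lh h₁ g₀ : ℝ) (hβ : 0 < β) (hLh : 0 < Lh)
    (h : ℝ → ℝ) (hh_meas : Measurable h) (hh_per : ∀ x, h (x + Lh) = h x)
    (hh_bd : ∀ x, 0 ≤ h x ∧ h x ≤ h₁)
    (g : ℝ → ℝ) (hg_meas : Measurable g)
    (w : ℝ → ℝ) (hw : IntegrableOn w (Ioo 0 1)) :
    (∀ ε : ℝ, 0 < ε → ε * h₁ ≤ g₀ →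
      (1 / ε) * ∫ p in {q : ℝ × ℝ | q.1 ∈ Ioo (0 : ℝ) 1 ∧
          q.2 ∈ Ioo (g q.1 - ε * h (q.1 / ε ^ β)) (g q.1)}, w p.1
        = ∫ x in Ioo (0 : ℝ) 1, h (x / ε ^ β) * w x) ∧
    Tendsto (fun ε : ℝ => ∫ x in Ioo (0 : ℝ) 1, h (x / ε ^ β) * w x)
      (nhdsWithin 0 (Ioi 0))
      (nhds ((Lh⁻¹ * ∫ s in Ioo (0 : ℝ) Lh, h s) * ∫ x in Ioo (0 : ℝ) 1, w x)) := by
  refine ⟨fun ε hε _ => ?_, ?_⟩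
  · rw [Measure.volume_eq_prod]
    erw [setIntegral_regionBetween_comp_fst (f := fun x => g x - ε * h (x / ε ^ β)) (by fun_prop)
      hg_meas measurableSet_Ioo (fun x _ => sub_le_self _ (mul_nonneg hε.le (hh_bd _).1))
      hw.aestronglyMeasurable]
    simp only [sub_sub_cancel, smul_eq_mul, mul_assoc, integral_const_mul]
    field_simp
  · have hbd : ∀ x, |h x| ≤ h₁ := fun x =>
      abs_le.2 ⟨by linarith [hh_bd x], (hh_bd x).2⟩
    have hlim := (Function.Periodic.tendsto_integral_comp_div_mul hh_per hLh.ne' hh_meas hbd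
      ((integrable_indicator_iff measurableSet_Ioo).2 hw)).comp
      ((tendsto_rpow_nhdsGT_zero hβ).mono_right (nhdsWithin_mono _ fun x hx => ne_of_gt hx))
    have hind : ∀ δ, ∫ x, h (x / δ) * (Ioo 0 1).indicator w x = ∫ x in Ioo 0 1, h (x / δ) * w x :=
      fun δ => by
        rw [← integral_indicator measurableSet_Ioo]
        exact integral_congr_ae (ae_of_all _ fun x =>
          (indicator_mul_right (Ioo 0 1) (fun x => h (x / δ)) w).symm)
    simpa only [Function.comp_def, hind, integral_indicator measurableSet_Ioo,
      intervalIntegral.integral_of_le hLh.le, integral_Ioc_eq_integral_Ioo] using hlim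

/-- Let `β > 0`, `h` be measurable, `L_h`-periodic with `0 ≤ h ≤ h₁`,
and `g` measurable with `0 < g₀ ≤ g ≤ g₁` on `(0,1)`. For `ε > 0` with `ε h₁ ≤ g₀`, let
`θ_ε = {(x₁,x₂) : 0 < x₁ < 1, g x₁ - ε h (x₁/ε^β) < x₂ < g x₁}`. Then for every
`w ∈ L¹(0,1)`, `(1/ε) ∫_{θ_ε} w x₁ = ∫₀¹ h (x₁/ε^β) w x₁ dx₁ → μ_h ∫₀¹ w x₁ dx₁`
as `ε → 0⁺`, where `μ_h = (1/L_h) ∫₀^{L_h} h`. -/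
theorem concentrating_strip_average (β Lh h₁ g₀ g₁ : ℝ) (hβ : 0 < β) (hLh : 0 < Lh)
    (h : ℝ → ℝ) (hh_meas : Measurable h) (hh_per : ∀ x, h (x + Lh) = h x)
    (hh_bd : ∀ x, 0 ≤ h x ∧ h x ≤ h₁)
    (g : ℝ → ℝ) (hg_meas : Measurable g) (hg₀ : 0 < g₀)
    (hg_bd : ∀ x ∈ Ioo (0 : ℝ) 1, g₀ ≤ g x ∧ g x ≤ g₁)
    (w : ℝ → ℝ) (hw : IntegrableOn w (Ioo 0 1)) :
    (∀ ε : ℝ, 0 < ε → ε * h₁ ≤ g₀ →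
      (1 / ε) * ∫ p in {q : ℝ × ℝ | q.1 ∈ Ioo (0 : ℝ) 1 ∧
          q.2 ∈ Ioo (g q.1 - ε * h (q.1 / ε ^ β)) (g q.1)}, w p.1
        = ∫ x in Ioo (0 : ℝ) 1, h (x / ε ^ β) * w x) ∧
    Tendsto (fun ε : ℝ => ∫ x in Ioo (0 : ℝ) 1, h (x / ε ^ β) * w x)
      (nhdsWithin 0 (Ioi 0))
      (nhds ((Lh⁻¹ * ∫ s in Ioo (0 : ℝ) Lh, h s) * ∫ x in Ioo (0 : ℝ) 1, w x)) :=
  concentrating_strip_average_general β Lh h₁ g₀ hβ hLh h hh_meas hh_per hh_bd g hg_meas w hw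
end
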